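/- Let u, v : [0,1] → ℝ be differentiable convex functions with derivatives bounded by L (i.e., ‖u'‖_∞ + ‖v'‖_∞ ≤ L), and suppose u and v are C². Then ∫₀¹ (u'(x) - v'(x))² dx ≤ 4 L ‖u - v‖_{L^∞([0,1])}. -/

import Mathlib

/-!
Put `w = u - v`. Integrating by parts,
`∫ (w')² = [w w']₀¹ - ∫ w (u'' - v'')`. The boundary term is at most `2 ‖w‖_∞ L`, and since
`u'', v'' ≥ 0` by convexity, `|∫ w (u'' - v'')| ≤ ‖w‖_∞ ∫ (u'' + v'') = ‖w‖_∞ [u' + v']₀¹`,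
which is again at most `2 ‖w‖_∞ L`.
-/

open Set Topology MeasureTheory

section Interval

variable {a b : ℝ}

theorem ContinuousOn.abs_le_of_forall_mem_Ioo {f : ℝ → ℝ} {C : ℝ} (hab : a < b)
    (hf : ContinuousOn f (Icc a b)) (h : ∀ x ∈ Ioo a b, |f x| ≤ C) :
    ∀ x ∈ Icc a b, |f x| ≤ C := by
  rw [← closure_Ioo hab.ne] at hf ⊢
  exact fun x hx ↦ ((hf x hx).mono subset_closure).abs.closure_le hx continuousWithinAt_const h

theorem intervalIntegrable_deriv_of_nonneg_of_le {g g' : ℝ → ℝ} (hab : a ≤ b)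
    (hg : ContinuousOn g (Icc a b)) (hgg' : ∀ x ∈ Ioo a b, HasDerivAt g (g' x) x)
    (hg'0 : ∀ x ∈ Ioo a b, 0 ≤ g' x) : IntervalIntegrable g' volume a b :=
  intervalIntegral.intervalIntegrable_deriv_of_nonneg (by rwa [uIcc_of_le hab])
    (by simpa only [min_eq_left hab, max_eq_right hab] using hgg')
    (by simpa only [min_eq_left hab, max_eq_right hab] using hg'0)

theorem integral_mul_deriv_le_of_deriv_nonneg {w p p' : ℝ → ℝ} {M : ℝ} (hab : a ≤ b)
    (hw : ContinuousOn w (Icc a b)) (hwM : ∀ x ∈ Ioo a b, w x ≤ M)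
    (hp : ContinuousOn p (Icc a b)) (hpp' : ∀ x ∈ Ioo a b, HasDerivAt p (p' x) x)
    (hp'0 : ∀ x ∈ Ioo a b, 0 ≤ p' x) :
    ∫ x in a..b, w x * p' x ≤ M * (p b - p a) := by
  have hp'int := intervalIntegrable_deriv_of_nonneg_of_le hab hp hpp' hp'0
  calc ∫ x in a..b, w x * p' x ≤ ∫ x in a..b, M * p' x :=
        intervalIntegral.integral_mono_on_of_le_Ioo hab
          (hp'int.continuousOn_mul (by rwa [uIcc_of_le hab])) (hp'int.const_mul M)
          fun x hx ↦ mul_le_mul_of_nonneg_right (hwM x hx) (hp'0 x hx)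
    _ = M * (p b - p a) := by
        rw [intervalIntegral.integral_const_mul,
          intervalIntegral.integral_eq_sub_of_hasDerivAt_of_le hab hp hpp' hp'int]

theorem integral_sq_eq_sub_integral_mul_deriv {w g g' : ℝ → ℝ} (hab : a ≤ b)
    (hw : ContinuousOn w (Icc a b)) (hwg : ∀ x ∈ Ioo a b, HasDerivAt w (g x) x)
    (hg : ContinuousOn g (Icc a b)) (hgg' : ∀ x ∈ Ioo a b, HasDerivAt g (g' x) x)
    (hg' : IntervalIntegrable g' volume a b) :
    ∫ x in a..b, g x ^ 2 = w b * g b - w a * g a - ∫ x in a..b, w x * g' x := by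
  simp only [sq]
  rw [intervalIntegral.integral_mul_deriv_eq_deriv_mul_of_hasDerivAt
    (by rwa [uIcc_of_le hab]) (by rwa [uIcc_of_le hab])
    (by simpa only [min_eq_left hab, max_eq_right hab] using hwg)
    (by simpa only [min_eq_left hab, max_eq_right hab] using hgg')
    (hg.intervalIntegrable_of_Icc hab) hg']
  ring

theorem integral_sq_sub_le_of_deriv_nonneg {w p q p' q' : ℝ → ℝ} {M Lp Lq : ℝ}
    (hab : a ≤ b) (hw : ContinuousOn w (Icc a b))
    (hww' : ∀ x ∈ Ioo a b, HasDerivAt w (p x - q x) x)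
    (hp : ContinuousOn p (Icc a b)) (hpp' : ∀ x ∈ Ioo a b, HasDerivAt p (p' x) x)
    (hp'0 : ∀ x ∈ Ioo a b, 0 ≤ p' x)
    (hq : ContinuousOn q (Icc a b)) (hqq' : ∀ x ∈ Ioo a b, HasDerivAt q (q' x) x)
    (hq'0 : ∀ x ∈ Ioo a b, 0 ≤ q' x)
    (hwM : ∀ x ∈ Icc a b, |w x| ≤ M) (hpL : ∀ x ∈ Icc a b, |p x| ≤ Lp)
    (hqL : ∀ x ∈ Icc a b, |q x| ≤ Lq) :
    ∫ x in a..b, (p x - q x) ^ 2 ≤ 4 * (Lp + Lq) * M := by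
  have ha : a ∈ Icc a b := left_mem_Icc.2 hab
  have hb : b ∈ Icc a b := right_mem_Icc.2 hab
  have hM : 0 ≤ M := (abs_nonneg _).trans (hwM a ha)
  have hp'int := intervalIntegrable_deriv_of_nonneg_of_le hab hp hpp' hp'0
  have hq'int := intervalIntegrable_deriv_of_nonneg_of_le hab hq hqq' hq'0
  have hparts := integral_sq_eq_sub_integral_mul_deriv hab hw hww' (hp.sub hq)
    (fun x hx ↦ (hpp' x hx).sub (hqq' x hx)) (hp'int.sub hq'int)
  have hsplit : ∫ x in a..b, w x * (p' x - q' x) =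
      -(∫ x in a..b, -w x * p' x) - ∫ x in a..b, w x * q' x := by
    simp only [mul_sub, neg_mul, intervalIntegral.integral_neg, neg_neg]
    have hw' : ContinuousOn w (uIcc a b) := by rwa [uIcc_of_le hab]
    exact intervalIntegral.integral_sub (hp'int.continuousOn_mul hw')
      (hq'int.continuousOn_mul hw')
  have hIp : ∫ x in a..b, -w x * p' x ≤ M * (p b - p a) :=
    integral_mul_deriv_le_of_deriv_nonneg hab hw.neg
    (fun x hx ↦ (neg_le_abs (w x)).trans (hwM x (Ioo_subset_Icc_self hx))) hp hpp' hp'0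
  have hIq := integral_mul_deriv_le_of_deriv_nonneg hab hw
    (fun x hx ↦ (le_abs_self (w x)).trans (hwM x (Ioo_subset_Icc_self hx))) hq hqq' hq'0
  have hend : ∀ x ∈ Icc a b, |w x * (p x - q x)| ≤ M * (Lp + Lq) := fun x hx ↦ by
    rw [abs_mul]
    exact mul_le_mul (hwM x hx) ((abs_sub _ _).trans (add_le_add (hpL x hx) (hqL x hx)))
      (abs_nonneg _) hM
  have hosc : ∀ {f : ℝ → ℝ} {L : ℝ}, (∀ x ∈ Icc a b, |f x| ≤ L) → f b - f a ≤ 2 * L :=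
    fun hf ↦ by linarith [le_of_abs_le (hf b hb), neg_le_of_abs_le (hf a ha)]
  calc ∫ x in a..b, (p x - q x) ^ 2
      = w b * (p b - q b) - w a * (p a - q a) + (∫ x in a..b, -w x * p' x)
          + ∫ x in a..b, w x * q' x := by linarith [hparts, hsplit]
    _ ≤ M * (Lp + Lq) + M * (Lp + Lq) + M * (p b - p a) + M * (q b - q a) := by
        linarith [hIp, hIq, le_of_abs_le (hend b hb), neg_le_of_abs_le (hend a ha)]
    _ ≤ 4 * (Lp + Lq) * M := by
        linarith [mul_le_mul_of_nonneg_left (hosc hpL) hM, mul_le_mul_of_nonneg_left (hosc hqL) hM]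

end Interval

theorem ConvexOn.deriv_derivWithin_nonneg {f : ℝ → ℝ} {S : Set ℝ} {x : ℝ}
    (hfc : ConvexOn ℝ S f) (hfd : DifferentiableOn ℝ f S) (hx : S ∈ 𝓝 x) :
    0 ≤ deriv (derivWithin f S) x := by
  rw [← derivWithin_of_mem_nhds hx]
  exact (hfc.monotoneOn_derivWithin hfd).derivWithin_nonneg

section ContDiffIcc

variable {a b : ℝ} {f : ℝ → ℝ}

theorem ContDiffOn.bddAbove_abs_deriv_Icc (hab : a < b) (hf : ContDiffOn ℝ 1 f (Icc a b)) :
    BddAbove (range fun x : Icc a b ↦ |deriv f x|) := by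
  have hp := isCompact_Icc.bddAbove_image
    (hf.continuousOn_derivWithin (uniqueDiffOn_Icc hab) le_rfl).abs
  refine (hp.union (toFinite {|deriv f a|, |deriv f b|}).bddAbove).mono ?_
  rintro _ ⟨⟨x, hx⟩, rfl⟩
  rcases eq_endpoints_or_mem_Ioo_of_mem_Icc hx with rfl | rfl | hx'
  · simp
  · simp
  · exact Or.inl ⟨x, hx, by simp only [derivWithin_of_mem_nhds (Icc_mem_nhds hx'.1 hx'.2)]⟩

theorem ContDiffOn.abs_derivWithin_Icc_le {L : ℝ} (hab : a < b)
    (hf : ContDiffOn ℝ 1 f (Icc a b)) (hL : ∀ x ∈ Ioo a b, |deriv f x| ≤ L) :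
    ∀ x ∈ Icc a b, |derivWithin f (Icc a b) x| ≤ L :=
  (hf.continuousOn_derivWithin (uniqueDiffOn_Icc hab) le_rfl).abs_le_of_forall_mem_Ioo hab
    fun x hx ↦ by rw [derivWithin_of_mem_nhds (Icc_mem_nhds hx.1 hx.2)]; exact hL x hx

theorem ContDiffOn.hasDerivAt_derivWithin_Icc {x : ℝ} (hf : ContDiffOn ℝ 2 f (Icc a b))
    (hx : x ∈ Ioo a b) :
    HasDerivAt (derivWithin f (Icc a b)) (deriv (derivWithin f (Icc a b)) x) x :=
  (((hf.derivWithin (uniqueDiffOn_Icc (hx.1.trans hx.2)) le_rfl).differentiableOn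
    one_ne_zero).differentiableAt (Icc_mem_nhds hx.1 hx.2)).hasDerivAt

/-- `deriv u` is junk at the endpoints, so the argument runs on `derivWithin u (Icc a b)`, the
continuous extension of `u'` to `[a, b]`, which agrees with `deriv u` on `(a, b)`. -/
theorem integral_sq_deriv_sub_le_of_convexOn {u v : ℝ → ℝ} {M Lu Lv : ℝ} (hab : a < b)
    (hu : ContDiffOn ℝ 2 u (Icc a b)) (hv : ContDiffOn ℝ 2 v (Icc a b))
    (hucvx : ConvexOn ℝ (Icc a b) u) (hvcvx : ConvexOn ℝ (Icc a b) v)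
    (hM : ∀ x ∈ Icc a b, |u x - v x| ≤ M)
    (hLu : ∀ x ∈ Ioo a b, |deriv u x| ≤ Lu) (hLv : ∀ x ∈ Ioo a b, |deriv v x| ≤ Lv) :
    ∫ x in a..b, (deriv u x - deriv v x) ^ 2 ≤ 4 * (Lu + Lv) * M := by
  have hderiv : ∀ (f : ℝ → ℝ), ∀ x ∈ Ioo a b, derivWithin f (Icc a b) x = deriv f x :=
    fun _ x hx ↦ derivWithin_of_mem_nhds (Icc_mem_nhds hx.1 hx.2)
  have hu1 : ContDiffOn ℝ 1 u (Icc a b) := hu.of_le one_le_two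
  have hv1 : ContDiffOn ℝ 1 v (Icc a b) := hv.of_le one_le_two
  rw [intervalIntegral.integral_congr_Ioo_of_le hab.le (g := fun x ↦
    (derivWithin u (Icc a b) x - derivWithin v (Icc a b) x) ^ 2)
    fun x hx ↦ by simp only [hderiv u x hx, hderiv v x hx]]
  refine integral_sq_sub_le_of_deriv_nonneg hab.le (hu.continuousOn.sub hv.continuousOn)
    (fun x hx ↦ ?_)
    (hu1.continuousOn_derivWithin (uniqueDiffOn_Icc hab) le_rfl)
    (fun x hx ↦ hu.hasDerivAt_derivWithin_Icc hx)
    (fun x hx ↦ hucvx.deriv_derivWithin_nonneg hu1.differentiableOn_one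
      (Icc_mem_nhds hx.1 hx.2))
    (hv1.continuousOn_derivWithin (uniqueDiffOn_Icc hab) le_rfl)
    (fun x hx ↦ hv.hasDerivAt_derivWithin_Icc hx)
    (fun x hx ↦ hvcvx.deriv_derivWithin_nonneg hv1.differentiableOn_one
      (Icc_mem_nhds hx.1 hx.2))
    hM (hu1.abs_derivWithin_Icc_le hab hLu) (hv1.abs_derivWithin_Icc_le hab hLv)
  rw [hderiv u x hx, hderiv v x hx]
  exact ((hu1.differentiableOn_one.differentiableAt (Icc_mem_nhds hx.1 hx.2)).hasDerivAt).sub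
    (hv1.differentiableOn_one.differentiableAt (Icc_mem_nhds hx.1 hx.2)).hasDerivAt

end ContDiffIcc

/-- If `u, v : [0,1] → ℝ` are `C²` convex functions with `‖u'‖_∞ + ‖v'‖_∞ ≤ L`, then
`∫₀¹ (u' - v')² ≤ 4 L ‖u - v‖_{L^∞([0,1])}`. -/
theorem stmt_1 (u v : ℝ → ℝ) (L : ℝ)
    (hu : ContDiffOn ℝ 2 u (Set.Icc (0 : ℝ) 1)) (hv : ContDiffOn ℝ 2 v (Set.Icc (0 : ℝ) 1))
    (hucvx : ConvexOn ℝ (Set.Icc (0 : ℝ) 1) u) (hvcvx : ConvexOn ℝ (Set.Icc (0 : ℝ) 1) v)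
    (hL : (⨆ x : Set.Icc (0 : ℝ) 1, |deriv u x|) + (⨆ x : Set.Icc (0 : ℝ) 1, |deriv v x|) ≤ L) :
    ∫ x in (0 : ℝ)..1, (deriv u x - deriv v x) ^ 2 ≤
      4 * L * ⨆ x : Set.Icc (0 : ℝ) 1, |u x - v x| := by
  have hMbdd : BddAbove (range fun x : Icc (0 : ℝ) 1 ↦ |u x - v x|) := by
    simpa only [image_eq_range, Pi.sub_apply] using
      isCompact_Icc.bddAbove_image (hu.continuousOn.sub hv.continuousOn).abs
  have hM : ∀ x ∈ Icc (0 : ℝ) 1, |u x - v x| ≤ ⨆ x : Icc (0 : ℝ) 1, |u x - v x| :=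
    fun x hx ↦ le_ciSup hMbdd ⟨x, hx⟩
  have hM0 : 0 ≤ ⨆ x : Icc (0 : ℝ) 1, |u x - v x| := (abs_nonneg _).trans (hM 0 (by simp))
  have hL' : ∀ {f : ℝ → ℝ}, ContDiffOn ℝ 2 f (Icc 0 1) →
      ∀ x ∈ Ioo (0 : ℝ) 1, |deriv f x| ≤ ⨆ x : Icc (0 : ℝ) 1, |deriv f x| := fun hf x hx ↦
    le_ciSup ((hf.of_le one_le_two).bddAbove_abs_deriv_Icc zero_lt_one) ⟨x, Ioo_subset_Icc_self hx⟩
  calc _ ≤ 4 * ((⨆ x : Icc (0 : ℝ) 1, |deriv u x|) + ⨆ x : Icc (0 : ℝ) 1, |deriv v x|) *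
        ⨆ x : Icc (0 : ℝ) 1, |u x - v x| :=
        integral_sq_deriv_sub_le_of_convexOn zero_lt_one hu hv hucvx hvcvx hM (hL' hu) (hL' hv)
    _ ≤ _ := by gcongr
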